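/- arXiv:0912.4935 — 3 statements merged into one kernel-verified Lean document; each statement's English description precedes it below -/
import Mathlib

section
/- For a set of m disjunctive clauses each containing exactly q distinct literals over distinct variables, there exists a truth assignment satisfying at least ⌈((2^q − 1)/2^q)·m⌉ clauses. -/
/-!
Averaging over assignments. Since the `q` variables of a clause are distinct, exactly a
`2 ^ (-q)` fraction of all assignments of a finite set of variables falsifies it, so on average
`m / 2 ^ q` clauses are falsified and some assignment falsifies at most `⌊m / 2 ^ q⌋` of them.
Only the finitely many variables occurring in the clauses matter, so the average is taken over
assignments of those.
-/

open Finset Function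

section

variable {W ι β : Type*} [Fintype W] [DecidableEq W] [Fintype ι] [Fintype β] [DecidableEq β]

theorem card_filter_comp_eq_mul_pow {u : ι → W} (hu : Injective u) (c : ι → β) :
    #{f : W → β | f ∘ u = c} * Fintype.card β ^ Fintype.card ι =
      Fintype.card β ^ Fintype.card W := by
  classical
  let e : (W → β) ≃ (ι → β) × ({w // w ∉ Set.range u} → β) :=
    (Equiv.piEquivPiSubtypeProd (· ∈ Set.range u) _).trans
      ((Equiv.arrowCongr (Equiv.ofInjective u hu).symm (Equiv.refl β)).prodCongr (Equiv.refl _))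
  have he : ∀ f, (e f).1 = f ∘ u := fun f => rfl
  have hfiber : #{f : W → β | f ∘ u = c} = Fintype.card ({w // w ∉ Set.range u} → β) := by
    rw [← Fintype.card_subtype,
      Fintype.card_congr (e.subtypeEquiv (p := (· ∘ u = c)) (q := (·.1 = c)) fun f => by rw [he]),
      Fintype.card_congr (Equiv.prodSubtypeFstEquivSubtypeProd (p := (· = c))), Fintype.card_prod,
      Fintype.card_unique, one_mul]
  rw [hfiber, Fintype.card_fun, Fintype.card_subtype_compl, Set.card_range_of_injective hu,
    ← pow_add, Nat.sub_add_cancel (Fintype.card_le_of_injective u hu)]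

theorem exists_card_filter_comp_eq_mul_pow_le [Nonempty β] {J : Type*} [Fintype J]
    {u : J → ι → W} (hu : ∀ j, Injective (u j)) (c : J → ι → β) :
    ∃ f : W → β, #{j | f ∘ u j = c j} * Fintype.card β ^ Fintype.card ι ≤ Fintype.card J := by
  have hsum : ∑ f : W → β, #{j | f ∘ u j = c j} * Fintype.card β ^ Fintype.card ι =
      ∑ _f : W → β, Fintype.card J := by
    calc ∑ f : W → β, #{j | f ∘ u j = c j} * Fintype.card β ^ Fintype.card ι
        = ∑ j, #{f : W → β | f ∘ u j = c j} * Fintype.card β ^ Fintype.card ι := by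
          rw [← sum_mul, ← sum_mul]
          congr 1
          exact sum_card_bipartiteAbove_eq_sum_card_bipartiteBelow (fun f j => f ∘ u j = c j)
      _ = ∑ _f : W → β, Fintype.card J := by
          simp [card_filter_comp_eq_mul_pow (hu _), mul_comm]
  obtain ⟨f, -, hf⟩ := exists_le_of_sum_le univ_nonempty hsum.le
  exact ⟨f, hf⟩

end

theorem exists_assignment_satisfying_many_clauses_of_fintype {W : Type*} [Fintype W] {m q : ℕ}
    (vars : Fin m → Fin q → W) (hinj : ∀ j : Fin m, Injective (vars j))
    (sign : Fin m → Fin q → Bool) :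
    ∃ a : W → Bool, m - m / 2 ^ q ≤ #{j | ∃ t, a (vars j t) = sign j t} := by
  classical
  -- clause `j` is falsified by `a` exactly when `a ∘ vars j = fun t => !sign j t`
  obtain ⟨a, ha⟩ := exists_card_filter_comp_eq_mul_pow_le hinj fun j t => !sign j t
  refine ⟨a, ?_⟩
  have hunsat : #{j | ¬∃ t, a (vars j t) = sign j t} ≤ m / 2 ^ q := by
    rw [Nat.le_div_iff_mul_le (by positivity)]
    simpa [funext_iff, Bool.eq_not_iff] using ha
  have hsplit := card_filter_add_card_filter_not (s := univ)
    fun j : Fin m => ∃ t, a (vars j t) = sign j t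
  rw [card_univ, Fintype.card_fin] at hsplit
  omega

theorem exists_assignment_satisfying_many_clauses_general
    {V : Type*} (m q : ℕ)
    (vars : Fin m → Fin q → V)
    (hinj : ∀ j : Fin m, Function.Injective (vars j))
    (sign : Fin m → Fin q → Bool) :
    ∃ a : V → Bool,
      m - m / 2 ^ q ≤
        (Finset.univ.filter (fun j : Fin m => ∃ t : Fin q, a (vars j t) = sign j t)).card := by
  classical
  let W := Set.range fun p : Fin m × Fin q => vars p.1 p.2
  let varsW : Fin m → Fin q → W := fun j t => ⟨vars j t, (j, t), rfl⟩
  obtain ⟨b, hb⟩ := exists_assignment_satisfying_many_clauses_of_fintype varsW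
    (fun j _ _ h => hinj j (congrArg Subtype.val h)) sign
  refine ⟨extend Subtype.val b fun _ => false, ?_⟩
  have hextend : ∀ j t, extend Subtype.val b (fun _ => false) (vars j t) = b (varsW j t) :=
    fun j t => Subtype.val_injective.extend_apply b _ (varsW j t)
  simpa only [hextend] using hb

/-- For `m` disjunctive clauses, each containing exactly `q` literals over `q` distinct
variables, there is a truth assignment satisfying at least `⌈((2^q - 1)/2^q) * m⌉`
clauses; in natural numbers this count is `m - m / 2^q`. Clause `j` has variables
`vars j t` with required signs `sign j t`, and is satisfied by an assignment `a` if some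
literal is true. -/
theorem exists_assignment_satisfying_many_clauses
    {V : Type*} (m q : ℕ) (hq : 1 ≤ q)
    (vars : Fin m → Fin q → V)
    (hinj : ∀ j : Fin m, Function.Injective (vars j))
    (sign : Fin m → Fin q → Bool) :
    ∃ a : V → Bool,
      m - m / 2 ^ q ≤
        (Finset.univ.filter (fun j : Fin m => ∃ t : Fin q, a (vars j t) = sign j t)).card :=
  exists_assignment_satisfying_many_clauses_general m q vars hinj sign
end

section
/- The edges of every finite simple graph of maximum degree at most 3 can be partitioned into two linear forests. -/
/-!
By Hall's theorem the vertices of degree three can be matched injectively to neighbours; putting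
the edges `v – f v` in one class and the rest in the other gives a split of the edges into two
classes of maximum degree at most two. Take such a split minimising the number of edges that lie
on a cycle of their class. If one class had a cycle `C`, every vertex of `C` would have degree at
most one in the other class; a connected graph of maximum degree two has at most two such
vertices, so some edge `uv` of `C` joins two different components of the other class. Moving `uv`
to the other class breaks a cycle without creating one, contradicting minimality.
-/

/-- A linear forest: an acyclic graph in which every vertex has degree at most 2
(every connected component is a path). -/
def IsLinearForest {V : Type*} (H : SimpleGraph V) : Prop :=
  H.IsAcyclic ∧ ∀ v : V, (H.neighborSet v).ncard ≤ 2

open Finset Function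

theorem Finset.exists_injective_of_card_eq_of_card_filter_le {ι α : Type*} [Fintype ι]
    [DecidableEq α] {t : ι → Finset α} {d : ℕ} (hd : 0 < d) (ht : ∀ i, #(t i) = d)
    (hmem : ∀ a, #{i | a ∈ t i} ≤ d) : ∃ f : ι → α, Injective f ∧ ∀ i, f i ∈ t i := by
  refine (all_card_le_biUnion_card_iff_exists_injective t).1 fun s => ?_
  have := card_mul_le_card_mul (fun i a => a ∈ t i) (s := s) (t := s.biUnion t) (m := d)
    (n := d) (fun i hi => ?_) (fun a _ => ?_)
  · exact Nat.le_of_mul_le_mul_right this hd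
  · rw [bipartiteAbove, filter_mem_eq_inter, inter_eq_right.2 (subset_biUnion_of_mem t hi), ht]
  · exact (card_le_card (filter_subset_filter _ (subset_univ s))).trans (hmem a)

namespace SimpleGraph

variable {V : Type*}

lemma ncard_neighborSet_eq_degree (H : SimpleGraph V) (v : V) [Fintype (H.neighborSet v)] :
    (H.neighborSet v).ncard = H.degree v := by
  rw [← card_neighborSet_eq_degree, Set.ncard_eq_toFinset_card', Set.toFinset_card]

theorem Connected.ncard_leaves_le_two [Finite V] {H : SimpleGraph V} (hH : H.Connected)
    (hdeg : ∀ v, (H.neighborSet v).ncard ≤ 2) :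
    {v | (H.neighborSet v).ncard ≤ 1}.ncard ≤ 2 := by
  classical
  have := Fintype.ofFinite V
  simp only [ncard_neighborSet_eq_degree] at hdeg ⊢
  have hconn : Fintype.card V ≤ #H.edgeFinset + 1 := by
    have := hH.card_vert_le_card_edgeSet_add_one
    rwa [Nat.card_eq_fintype_card, Nat.card_eq_fintype_card, ← edgeFinset_card] at this
  have hsum : ∑ v, (H.degree v + if H.degree v ≤ 1 then 1 else 0) ≤ ∑ _v : V, 2 :=
    Finset.sum_le_sum fun v _ => by split_ifs with h <;> linarith [hdeg v]
  rw [Finset.sum_add_distrib, sum_degrees_eq_twice_card_edges, Finset.sum_boole,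
    Finset.sum_const, Finset.card_univ, smul_eq_mul] at hsum
  rw [Set.ncard_eq_toFinset_card', Set.toFinset_ofPred]
  push_cast at hsum
  omega

lemma ConnectedComponent.ncard_neighborSet_toSimpleGraph {H : SimpleGraph V}
    (C : H.ConnectedComponent) (y : C) :
    (C.toSimpleGraph.neighborSet y).ncard = (H.neighborSet y).ncard :=
  Set.ncard_preimage_of_injective_subset_range Subtype.val_injective fun _ hz =>
    ⟨⟨_, C.mem_supp_of_adj_mem_supp y.2 hz⟩, rfl⟩

theorem ncard_le_two_of_forall_reachable_of_ncard_neighborSet_le_one [Finite V]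
    {H : SimpleGraph V} (hdeg : ∀ v, (H.neighborSet v).ncard ≤ 2) {X : Set V} {x : V}
    (hX : ∀ y ∈ X, H.Reachable x y ∧ (H.neighborSet y).ncard ≤ 1) : X.ncard ≤ 2 := by
  set C := H.connectedComponentMk x
  have hXC : X ⊆ Subtype.val '' {y : C | (C.toSimpleGraph.neighborSet y).ncard ≤ 1} :=
    fun y hy => ⟨⟨y, ConnectedComponent.sound (hX y hy).1.symm⟩,
      by simpa [C.ncard_neighborSet_toSimpleGraph] using (hX y hy).2, rfl⟩
  calc X.ncard ≤ (Subtype.val '' {y : C | (C.toSimpleGraph.neighborSet y).ncard ≤ 1}).ncard :=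
        Set.ncard_le_ncard hXC
    _ ≤ {y : C | (C.toSimpleGraph.neighborSet y).ncard ≤ 1}.ncard := Set.ncard_image_le
    _ ≤ 2 := C.connected_toSimpleGraph.ncard_leaves_le_two fun y => by
        rw [C.ncard_neighborSet_toSimpleGraph]; exact hdeg y

lemma Walk.reachable_of_mem_support {H K : SimpleGraph V} {a b : V} (w : H.Walk a b)
    (h : ∀ u v, s(u, v) ∈ w.edges → K.Reachable u v) {y : V} (hy : y ∈ w.support) :
    K.Reachable a y := by
  induction w with
  | nil => rw [Walk.mem_support_nil_iff.1 hy]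
  | @cons u v _ _ p ih =>
    rcases List.mem_cons.1 (Walk.support_cons _ _ ▸ hy) with rfl | hy
    · rfl
    · exact (h u v (by simp)).trans (ih (fun u' v' he => h u' v' (by simp [he])) hy)

lemma Walk.IsCycle.three_le_ncard_support {H : SimpleGraph V} {x : V} {c : H.Walk x x}
    (hc : c.IsCycle) : 3 ≤ {y | y ∈ c.support}.ncard := by
  classical
  have htail : {y | y ∈ c.support.tail} = ↑c.support.tail.toFinset := by ext; simp
  calc 3 ≤ c.support.tail.length := by
        rw [List.length_tail, Walk.length_support]; simpa using hc.three_le_length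
    _ = {y | y ∈ c.support.tail}.ncard := by
        rw [htail, Set.ncard_coe_finset, List.toFinset_card_of_nodup hc.support_nodup]
    _ ≤ {y | y ∈ c.support}.ncard :=
        Set.ncard_le_ncard (fun y hy => List.mem_of_mem_tail hy) c.support.finite_toSet

lemma Walk.IsCycle.two_le_ncard_neighborSet [Finite V] {H : SimpleGraph V} {x y : V}
    {c : H.Walk x x} (hc : c.IsCycle) (hy : y ∈ c.support) : 2 ≤ (H.neighborSet y).ncard :=
  hc.ncard_neighborSet_toSubgraph_eq_two hy ▸
    Set.ncard_le_ncard (fun _ hz => c.toSubgraph.adj_sub hz) (Set.toFinite _)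

def cycleEdges (H : SimpleGraph V) : Set (Sym2 V) :=
  {e | ∃ (v : V) (c : H.Walk v v), c.IsCycle ∧ e ∈ c.edges}

lemma cycleEdges_subset_edgeSet (H : SimpleGraph V) : H.cycleEdges ⊆ H.edgeSet := by
  rintro e ⟨v, c, -, he⟩
  exact c.edges_subset_edgeSet he

lemma cycleEdges_mono {H K : SimpleGraph V} (h : H ≤ K) : H.cycleEdges ⊆ K.cycleEdges := by
  rintro e ⟨v, c, hc, he⟩
  exact ⟨v, c.mapLe h, hc.mapLe h, by simpa using he⟩

lemma cycleEdges_sup_edge_subset {H : SimpleGraph V} {u v : V} (huv : ¬H.Reachable u v) :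
    (H ⊔ edge u v).cycleEdges ⊆ H.cycleEdges := by
  rintro e ⟨w, c, hc, he⟩
  have hnot : s(u, v) ∉ c.edges := fun huvc => huv <| by
    obtain ⟨-, hr⟩ := adj_and_reachable_delete_edges_iff_exists_cycle.2 ⟨w, c, hc, huvc⟩
    refine hr.mono fun a b hab => ?_
    simp only [deleteEdges_adj, sup_adj, edge_adj, Set.mem_singleton_iff, Sym2.eq_iff] at hab
    tauto
  have hsub : ∀ e ∈ c.edges, e ∈ H.edgeSet := by
    intro e' he'
    have := c.edges_subset_edgeSet he'
    rw [edgeSet_sup] at this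
    exact this.resolve_right fun h => hnot (edgeSet_edge_subset h ▸ he')
  exact ⟨w, c.transfer H hsub, hc.transfer hsub, by simpa using he⟩

lemma ncard_neighborSet_sup_edge_le [Finite V] (H : SimpleGraph V) (u v w : V) :
    ((H ⊔ edge u v).neighborSet w).ncard ≤ (H.neighborSet w).ncard + 1 := by
  rw [neighborSet_sup]
  refine (Set.ncard_union_le _ _).trans (Nat.add_le_add_left ?_ _)
  refine (Set.ncard_le_one (Set.toFinite _)).2 fun a ha b hb => ?_
  simp only [mem_neighborSet, edge_adj] at ha hb
  grind

lemma neighborSet_sup_edge_of_ne (H : SimpleGraph V) {u v w : V} (hu : w ≠ u) (hv : w ≠ v) :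
    (H ⊔ edge u v).neighborSet w = H.neighborSet w := by
  ext z
  simp only [neighborSet_sup, Set.mem_union, mem_neighborSet, edge_adj]
  tauto

lemma ncard_neighborSet_deleteEdges_add_compl [Finite V] (G : SimpleGraph V)
    (S : Set (Sym2 V)) (v : V) :
    ((G.deleteEdges S).neighborSet v).ncard + ((G.deleteEdges Sᶜ).neighborSet v).ncard =
      (G.neighborSet v).ncard := by
  rw [← Set.ncard_union_eq _ (Set.toFinite _) (Set.toFinite _)]
  · congr 1
    ext z
    simp only [Set.mem_union, mem_neighborSet, deleteEdges_adj, Set.mem_compl_iff]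
    tauto
  · rw [Set.disjoint_left]
    intro z h₁ h₂
    simp only [mem_neighborSet, deleteEdges_adj, Set.mem_compl_iff] at h₁ h₂
    exact h₂.2 h₁.2

theorem exists_injective_adj_of_ncard_neighborSet_eq [Finite V] {G : SimpleGraph V} {d : ℕ}
    (hd : 0 < d) (hdeg : ∀ v, (G.neighborSet v).ncard ≤ d) :
    ∃ f : {v // (G.neighborSet v).ncard = d} → V, Injective f ∧
      ∀ v : {v // (G.neighborSet v).ncard = d}, G.Adj v (f v) := by
  classical
  have := Fintype.ofFinite V
  have hmem (a : V) :
      #{v : {v // (G.neighborSet v).ncard = d} | a ∈ (G.neighborSet v).toFinset} ≤ d :=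
    calc _ ≤ #(G.neighborSet a).toFinset :=
          Finset.card_le_card_of_injOn Subtype.val (fun v hv => by simpa [adj_comm] using hv)
            Subtype.val_injective.injOn
      _ ≤ d := by rw [← Set.ncard_eq_toFinset_card']; exact hdeg a
  obtain ⟨f, hf, hft⟩ := Finset.exists_injective_of_card_eq_of_card_filter_le hd
    (fun v => by rw [← Set.ncard_eq_toFinset_card']; exact v.2) hmem
  exact ⟨f, hf, fun v => by simpa using hft v⟩

def IsDegreeTwoSplit (G : SimpleGraph V) (S : Set (Sym2 V)) : Prop :=
  ∀ v, ((G.deleteEdges S).neighborSet v).ncard ≤ 2 ∧ ((G.deleteEdges Sᶜ).neighborSet v).ncard ≤ 2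

theorem exists_isDegreeTwoSplit [Finite V] {G : SimpleGraph V}
    (hdeg : ∀ v, (G.neighborSet v).ncard ≤ 3) : ∃ S, G.IsDegreeTwoSplit S := by
  obtain ⟨f, hf, hadj⟩ := exists_injective_adj_of_ncard_neighborSet_eq (by norm_num) hdeg
  set S := Set.range fun v => s(v.1, f v)
  refine ⟨S, fun w => ⟨?_, ?_⟩⟩
  · by_cases hw : (G.neighborSet w).ncard = 3
    · have hsub : (G.deleteEdges S).neighborSet w ⊆ G.neighborSet w \ {f ⟨w, hw⟩} :=
        fun z hz => by
          simp only [S, mem_neighborSet, deleteEdges_adj, Set.mem_range, not_exists] at hz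
          exact ⟨hz.1, fun h => hz.2 ⟨w, hw⟩ (by rw [Set.mem_singleton_iff.1 h])⟩
      have hfw : f ⟨w, hw⟩ ∈ G.neighborSet w := hadj ⟨w, hw⟩
      have := Set.ncard_le_ncard hsub (Set.toFinite _)
      rwa [Set.ncard_sdiff_singleton_of_mem hfw, hw] at this
    · have := Set.ncard_le_ncard (neighborSet_mono (G.deleteEdges_le S) w) (Set.toFinite _)
      have := hdeg w
      omega
  · have hsub : (G.deleteEdges Sᶜ).neighborSet w ⊆
        {y | ∃ v, v.1 = w ∧ f v = y} ∪ {y | ∃ v, f v = w ∧ v.1 = y} := fun z hz => by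
      simp only [S, mem_neighborSet, deleteEdges_adj, Set.mem_compl_iff, not_not,
        Set.mem_range] at hz
      obtain ⟨v, hv⟩ := hz.2
      rcases Sym2.eq_iff.1 hv with ⟨h₁, h₂⟩ | ⟨h₁, h₂⟩
      · exact Or.inl ⟨v, h₁, h₂⟩
      · exact Or.inr ⟨v, h₂, h₁⟩
    have h₁ : {y | ∃ v, v.1 = w ∧ f v = y}.ncard ≤ 1 := by
      refine (Set.ncard_le_one (Set.toFinite _)).2 ?_
      rintro _ ⟨v, hv, rfl⟩ _ ⟨v', hv', rfl⟩
      rw [Subtype.ext (hv.trans hv'.symm)]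
    have h₂ : {y | ∃ v, f v = w ∧ v.1 = y}.ncard ≤ 1 := by
      refine (Set.ncard_le_one (Set.toFinite _)).2 ?_
      rintro _ ⟨v, hv, rfl⟩ _ ⟨v', hv', rfl⟩
      rw [hf (hv.trans hv'.symm)]
    calc _ ≤ _ := Set.ncard_le_ncard hsub (Set.toFinite _)
      _ ≤ _ := Set.ncard_union_le _ _
      _ ≤ 2 := by omega

theorem Walk.IsCycle.exists_mem_edges_not_reachable [Finite V] {H K : SimpleGraph V} {x : V}
    {c : H.Walk x x} (hc : c.IsCycle) (hK : ∀ v, (K.neighborSet v).ncard ≤ 2)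
    (hleaf : ∀ y ∈ c.support, (K.neighborSet y).ncard ≤ 1) :
    ∃ u v, s(u, v) ∈ c.edges ∧ ¬K.Reachable u v := by
  by_contra! h
  have := ncard_le_two_of_forall_reachable_of_ncard_neighborSet_le_one hK
    (X := {y | y ∈ c.support}) fun y hy => ⟨c.reachable_of_mem_support h hy, hleaf y hy⟩
  have := hc.three_le_ncard_support
  omega

noncomputable def splitCycleEdgeCount (G : SimpleGraph V) (S : Set (Sym2 V)) : ℕ :=
  (G.deleteEdges S).cycleEdges.ncard + (G.deleteEdges Sᶜ).cycleEdges.ncard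

lemma splitCycleEdgeCount_compl (G : SimpleGraph V) (S : Set (Sym2 V)) :
    G.splitCycleEdgeCount Sᶜ = G.splitCycleEdgeCount S := by
  rw [splitCycleEdgeCount, splitCycleEdgeCount, compl_compl, Nat.add_comm]

lemma IsDegreeTwoSplit.compl {G : SimpleGraph V} {S : Set (Sym2 V)} (hS : G.IsDegreeTwoSplit S) :
    G.IsDegreeTwoSplit Sᶜ := fun v => by
  rw [compl_compl]; exact (hS v).symm

theorem IsDegreeTwoSplit.exists_lt_of_isCycle [Finite V] {G : SimpleGraph V}
    (hdeg : ∀ v, (G.neighborSet v).ncard ≤ 3) {S : Set (Sym2 V)} (hS : G.IsDegreeTwoSplit S)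
    {x : V} {c : (G.deleteEdges S).Walk x x} (hc : c.IsCycle) :
    ∃ T, G.IsDegreeTwoSplit T ∧ G.splitCycleEdgeCount T < G.splitCycleEdgeCount S := by
  have hleaf : ∀ y ∈ c.support, ((G.deleteEdges Sᶜ).neighborSet y).ncard ≤ 1 := fun y hy => by
    have := hc.two_le_ncard_neighborSet hy
    have := G.ncard_neighborSet_deleteEdges_add_compl S y
    have := hdeg y
    omega
  obtain ⟨u, v, huv, hnr⟩ := hc.exists_mem_edges_not_reachable (fun w => (hS w).2) hleaf
  have hadj : (G.deleteEdges S).Adj u v := c.adj_of_mem_edges huv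
  set T := insert s(u, v) S
  have hT₁ : G.deleteEdges T ≤ G.deleteEdges S := deleteEdges_anti (Set.subset_insert _ _)
  have hT₂ : G.deleteEdges Tᶜ = G.deleteEdges Sᶜ ⊔ edge u v := by
    ext a b
    simp only [T, deleteEdges_adj, sup_adj, edge_adj, Set.mem_compl_iff, Set.mem_insert_iff,
      Sym2.eq_iff] at hadj ⊢
    have := hadj.1.ne
    have := hadj.1.symm
    grind
  refine ⟨T, fun w => ⟨(Set.ncard_le_ncard (neighborSet_mono hT₁ w)
    (Set.toFinite _)).trans (hS w).1, ?_⟩, ?_⟩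
  · rw [hT₂]
    by_cases hw : w = u ∨ w = v
    · have hwc : w ∈ c.support := hw.elim (· ▸ c.fst_mem_support_of_mem_edges huv)
        (· ▸ c.snd_mem_support_of_mem_edges huv)
      have := hleaf w hwc
      have := ncard_neighborSet_sup_edge_le (G.deleteEdges Sᶜ) u v w
      omega
    · push Not at hw
      rw [neighborSet_sup_edge_of_ne _ hw.1 hw.2]
      exact (hS w).2
  · have h₁ : (G.deleteEdges T).cycleEdges ⊂ (G.deleteEdges S).cycleEdges := by
      refine (Set.ssubset_iff_of_subset (cycleEdges_mono hT₁)).2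
        ⟨s(u, v), ⟨x, c, hc, huv⟩, fun h => ?_⟩
      have := cycleEdges_subset_edgeSet _ h
      simp [T, edgeSet_deleteEdges] at this
    have h₂ : (G.deleteEdges Tᶜ).cycleEdges ⊆ (G.deleteEdges Sᶜ).cycleEdges :=
      hT₂ ▸ cycleEdges_sup_edge_subset hnr
    have := Set.ncard_lt_ncard h₁ (Set.toFinite _)
    have := Set.ncard_le_ncard h₂ (Set.toFinite _)
    unfold splitCycleEdgeCount
    omega

end SimpleGraph

open SimpleGraph

/-- The edges of every finite simple graph of maximum degree at most 3 can be
partitioned into two linear forests. -/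
theorem max_degree_three_two_linear_forests
    {V : Type*} [Fintype V] (G : SimpleGraph V)
    (hdeg : ∀ v : V, (G.neighborSet v).ncard ≤ 3) :
    ∃ c : Sym2 V → Fin 2, ∀ i : Fin 2,
      IsLinearForest (SimpleGraph.fromEdgeSet {e | e ∈ G.edgeSet ∧ c e = i}) := by
  classical
  obtain ⟨S, hS, hmin⟩ := Set.exists_min_image {S | G.IsDegreeTwoSplit S}
    G.splitCycleEdgeCount (Set.toFinite _) (exists_isDegreeTwoSplit hdeg)
  have hacyclic : ∀ T, G.IsDegreeTwoSplit T →
      G.splitCycleEdgeCount T = G.splitCycleEdgeCount S → (G.deleteEdges T).IsAcyclic :=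
    fun T hT hTS _ c hc => by
      obtain ⟨T', hT', hlt⟩ := hT.exists_lt_of_isCycle hdeg hc
      exact (hmin T' hT').not_gt (hTS ▸ hlt)
  refine ⟨fun e => if e ∈ S then 1 else 0, Fin.forall_fin_two.2 ⟨?_, ?_⟩⟩
  · rw [show fromEdgeSet _ = G.deleteEdges S by ext a b; simpa using fun h _ => h.ne]
    exact ⟨hacyclic S hS rfl, fun v => (hS v).1⟩
  · rw [show fromEdgeSet _ = G.deleteEdges Sᶜ by ext a b; simpa using fun h _ => h.ne]
    exact ⟨hacyclic Sᶜ hS.compl (splitCycleEdgeCount_compl G S), fun v => (hS v).2⟩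
end

section
/- In any d+2 subsequences of the d+2 genomic maps G→, G←, G_1, …, G_d constructed in the reduction from d-Dimensional Matching, every strip consists of exactly one pair of edge markers ⟨i_left, i_right⟩ for a single index i; in particular no strip contains markers of two different indices. -/
/-!
Both maps list whole marker pairs, so along any common subsequence the pair index is
weakly increasing (read in `G→`) and weakly decreasing (read in `G←`), hence constant.
A strictly increasing list of length at least two inside one pair `{2i+1, 2i+2}` is that pair.
-/

/-- The map `G→`: the pairs of edge markers `(2i+1, 2i+2)` for `0 ≤ i < n`,
listed with ascending indices, i.e. `[1, 2, 3, 4, …, 2n-1, 2n]`. -/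
def Gright (n : ℕ) : List ℕ :=
  (List.range n).flatMap (fun i => [2 * i + 1, 2 * i + 2])

/-- The map `G←`: the pairs of edge markers listed with descending indices,
i.e. `[2n-1, 2n, …, 3, 4, 1, 2]`. -/
def Gleft (n : ℕ) : List ℕ :=
  (List.range n).reverse.flatMap (fun i => [2 * i + 1, 2 * i + 2])

/-- The index `i` of the markers `2i+1` and `2i+2`. -/
def pairIndex (x : ℕ) : ℕ := (x - 1) / 2

lemma pairIndex_of_mem_pair {i x : ℕ} (hx : x ∈ [2 * i + 1, 2 * i + 2]) : pairIndex x = i := by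
  simp only [List.mem_cons, List.not_mem_nil, or_false] at hx
  rcases hx with rfl | rfl <;> simp only [pairIndex] <;> omega

lemma pairwise_pairIndex_flatMap {R : ℕ → ℕ → Prop} (hR : ∀ i, R i i) {s : List ℕ}
    (hs : s.Pairwise R) :
    (s.flatMap fun i => [2 * i + 1, 2 * i + 2]).Pairwise
      (fun a b => R (pairIndex a) (pairIndex b)) := by
  refine List.pairwise_flatMap.2 ⟨fun i _ => ?_, hs.imp fun hij x hx y hy => ?_⟩
  · rw [List.pairwise_pair, pairIndex_of_mem_pair (i := i) (by simp),
      pairIndex_of_mem_pair (i := i) (by simp)]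
    exact hR i
  · rwa [pairIndex_of_mem_pair hx, pairIndex_of_mem_pair hy]

lemma mem_Gright {n x : ℕ} : x ∈ Gright n ↔ ∃ i < n, x = 2 * i + 1 ∨ x = 2 * i + 2 := by
  simp [Gright]

lemma Gright_pairwise_lt (n : ℕ) : (Gright n).Pairwise (· < ·) := by
  refine List.pairwise_flatMap.2 ⟨fun i _ => by simp, ?_⟩
  refine List.pairwise_lt_range.imp fun hij x hx y hy => ?_
  simp only [List.mem_cons, List.not_mem_nil, or_false] at hx hy
  omega

lemma Gright_pairwise_pairIndex_le (n : ℕ) :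
    (Gright n).Pairwise (fun a b => pairIndex a ≤ pairIndex b) :=
  pairwise_pairIndex_flatMap le_refl (List.pairwise_lt_range.imp le_of_lt)

lemma Gleft_pairwise_pairIndex_ge (n : ℕ) :
    (Gleft n).Pairwise (fun a b => pairIndex b ≤ pairIndex a) :=
  pairwise_pairIndex_flatMap (R := fun i j => j ≤ i) le_refl
    (List.pairwise_reverse.2 (List.pairwise_lt_range.imp le_of_lt))

/-- Markers of different indices occur in opposite orders in `G→` and `G←`. -/
lemma pairwise_pairIndex_eq_of_sublist {n : ℕ} {l : List ℕ}
    (h₁ : l.Sublist (Gright n)) (h₂ : l.Sublist (Gleft n)) :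
    l.Pairwise (fun a b => pairIndex a = pairIndex b) :=
  List.Pairwise.imp₂ (fun _ _ => le_antisymm)
    ((Gright_pairwise_pairIndex_le n).sublist h₁) ((Gleft_pairwise_pairIndex_ge n).sublist h₂)

lemma eq_pair_of_pairwise_lt {α : Type*} [Preorder α] {a b : α} {l : List α} (hab : a < b)
    (hl : l.Pairwise (· < ·)) (hmem : ∀ x ∈ l, x = a ∨ x = b) (hlen : 2 ≤ l.length) :
    l = [a, b] := by
  obtain _ | ⟨x, _ | ⟨y, t⟩⟩ := l
  · simp at hlen
  · simp at hlen
  simp only [List.pairwise_cons, List.mem_cons, forall_eq_or_imp] at hl hmem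
  obtain ⟨⟨hxy, -⟩, hyt, -⟩ := hl
  obtain ⟨rfl | rfl, rfl | rfl, ht⟩ := hmem <;> try order
  cases t with
  | nil => rfl
  | cons z t => rcases ht z List.mem_cons_self with rfl | rfl <;> order [hyt z List.mem_cons_self]

/-- In the reduction from d-Dimensional Matching, any strip of subsequences of the
genomic maps `G→, G←, G_1, …, G_d` is in particular a common subsequence of `G→` and
`G←`; every such common subsequence of length at least two consists of the single pair
of edge markers of one index: it equals `[2i+1, 2i+2]` for some `i < n`. In particular
no strip contains markers of two different indices. -/
theorem strip_is_single_pair (n : ℕ) (l : List ℕ)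
    (h1 : l.Sublist (Gright n)) (h2 : l.Sublist (Gleft n)) (hlen : 2 ≤ l.length) :
    ∃ i < n, l = [2 * i + 1, 2 * i + 2] := by
  obtain ⟨x, t, rfl⟩ := List.exists_cons_of_length_pos (l := l) (by omega)
  obtain ⟨i, hi, hx⟩ := mem_Gright.1 (h1.subset List.mem_cons_self)
  have hsame : ∀ y ∈ x :: t, pairIndex y = pairIndex x := by
    refine List.forall_mem_cons.2 ⟨rfl, fun y hy => ?_⟩
    exact ((List.pairwise_cons.1 (pairwise_pairIndex_eq_of_sublist h1 h2)).1 y hy).symm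
  refine ⟨i, hi, eq_pair_of_pairwise_lt (by omega) ((Gright_pairwise_lt n).sublist h1)
    (fun y hy => ?_) hlen⟩
  obtain ⟨j, -, hy'⟩ := mem_Gright.1 (h1.subset hy)
  have := hsame y hy
  simp only [pairIndex] at this
  omega
end
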